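/- arXiv:math/0211357 — 4 statements merged into one kernel-verified Lean document; each statement's English description precedes it below -/
import Mathlib

section
/- Let K be a field of characteristic 0. If P(u,v) is a polynomial in two variables over K satisfying the 2-cocycle condition P(u, v+w) - P(u+v, w) - P(u,v) + P(v,w) = 0 (as polynomials in u,v,w), and P(u,0) = P(0,v) = 0 for all u,v, then there exists a one-variable polynomial Q over K with Q(0) = 0 such that P(u,v) = Q(u+v) - Q(u) - Q(v). -/
/-!
Differentiating the cocycle identity in `w` and then setting `w = 0` shows that
`D = ∂P/∂v` satisfies `D(u, v) = g(u + v) - g(v)` with `g(t) = D(t, 0)`. In characteristic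
zero `g` has an antiderivative `Q` with `Q(0) = 0`, and then `P - (Q(u + v) - Q(u) - Q(v))`
does not depend on `v`; it vanishes at `v = 0` because `P(u, 0) = 0`, hence everywhere.
-/

open MvPolynomial

namespace MvPolynomial

variable {R σ τ : Type*}

theorem pderiv_aeval [CommSemiring R] [Fintype τ] (f : τ → MvPolynomial σ R) (i : σ)
    (p : MvPolynomial τ R) :
    pderiv i (aeval f p) = ∑ j, aeval f (pderiv j p) * pderiv i (f j) := by
  classical
  induction p using MvPolynomial.induction_on with
  | C a => simp
  | add p q hp hq => simp only [map_add, hp, hq, add_mul, Finset.sum_add_distrib]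
  | mul_X p k hp =>
    simp only [map_mul, aeval_X, pderiv_mul, hp, map_add, pderiv_X, Pi.single_apply, add_mul,
      Finset.sum_add_distrib, mul_ite, mul_one, mul_zero, apply_ite (aeval f), map_zero, ite_mul,
      zero_mul, Finset.sum_ite_eq, Finset.mem_univ, if_true, Finset.sum_mul]
    ac_rfl

theorem notMem_vars_of_pderiv_eq_zero [CommSemiring R] [NoZeroDivisors R] [CharZero R]
    {p : MvPolynomial σ R} {i : σ} (h : pderiv i p = 0) : i ∉ p.vars := by
  rw [mem_vars_iff_mem_support]
  rintro ⟨d, hd, hi⟩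
  have hle : Finsupp.single i 1 ≤ d :=
    Finsupp.single_le_iff.mpr (Nat.one_le_iff_ne_zero.mpr (Finsupp.mem_support_iff.mp hi))
  have hcoeff := coeff_pderiv p (d - Finsupp.single i 1) (i := i)
  rw [h, coeff_zero, tsub_add_cancel_of_le hle, eq_comm, mul_eq_zero] at hcoeff
  exact hcoeff.elim (mem_support_iff.mp hd) (Nat.cast_add_one_ne_zero _)

theorem aeval_update_X_of_notMem_vars [CommSemiring R] [DecidableEq σ] {p : MvPolynomial σ R}
    {i : σ} (h : i ∉ p.vars) (a : MvPolynomial σ R) : aeval (Function.update X i a) p = p := by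
  conv_rhs => rw [← aeval_X_left_apply p]
  refine eval₂Hom_congr' rfl (fun j hj _ => ?_) rfl
  rw [Function.update_of_ne (ne_of_mem_of_not_mem hj h)]

theorem algHom_aeval_vecCons_two [CommSemiring R] {S T : Type*} [CommSemiring S] [Algebra R S]
    [CommSemiring T] [Algebra R T] (φ : S →ₐ[R] T) (a b : S) (p : MvPolynomial (Fin 2) R) :
    φ (aeval ![a, b] p) = aeval ![φ a, φ b] p := by
  rw [comp_aeval_apply]
  congr
  funext i
  fin_cases i <;> rfl

theorem aeval_vecCons_X_zero_X_one [CommSemiring R] (p : MvPolynomial (Fin 2) R) :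
    aeval ![X 0, X 1] p = p := by
  conv_rhs => rw [← aeval_X_left_apply p]
  congr
  funext i
  fin_cases i <;> rfl

end MvPolynomial

theorem Polynomial.exists_derivative_eq_and_coeff_zero_eq_zero {K : Type*} [Field K]
    [CharZero K] (g : Polynomial K) :
    ∃ G : Polynomial K, Polynomial.derivative G = g ∧ G.coeff 0 = 0 := by
  induction g using Polynomial.induction_on' with
  | add p q hp hq =>
    obtain ⟨G, hG, hG0⟩ := hp
    obtain ⟨H, hH, hH0⟩ := hq
    exact ⟨G + H, by rw [Polynomial.derivative_add, hG, hH],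
      by rw [Polynomial.coeff_add, hG0, hH0, add_zero]⟩
  | monomial n a =>
    refine ⟨Polynomial.monomial (n + 1) (a / (n + 1)), ?_,
      Polynomial.coeff_monomial_of_ne _ n.succ_ne_zero.symm⟩
    rw [Polynomial.derivative_monomial, Nat.add_sub_cancel, Nat.cast_add_one,
      div_mul_cancel₀ _ (Nat.cast_add_one_ne_zero n)]

section Coboundary

variable {R : Type*} [CommRing R]

noncomputable def coboundary (Q : Polynomial R) : MvPolynomial (Fin 2) R :=
  Polynomial.aeval (X 0 + X 1) Q - Polynomial.aeval (X 0) Q - Polynomial.aeval (X 1) Q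

theorem pderiv_one_coboundary (Q : Polynomial R) :
    pderiv 1 (coboundary Q) =
      Polynomial.aeval (X 0 + X 1) (Polynomial.derivative Q)
        - Polynomial.aeval (X 1) (Polynomial.derivative Q) := by
  simp only [coboundary, map_sub, Derivation.comp_aeval_eq, map_add, pderiv_X_self,
    pderiv_X_of_ne (show (0 : Fin 2) ≠ 1 by decide), smul_eq_mul, mul_one, mul_zero, zero_add,
    sub_zero]

theorem aeval_vecCons_X_zero_zero_coboundary (Q : Polynomial R) :
    (aeval ![X 0, 0] (coboundary Q) : MvPolynomial (Fin 2) R) = -C (Q.coeff 0) := by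
  simp only [coboundary, map_sub, ← Polynomial.aeval_algHom_apply, map_add, aeval_X,
    Matrix.cons_val_zero, Matrix.cons_val_one, add_zero, ← Polynomial.coeff_zero_eq_aeval_zero',
    algebraMap_eq]
  ring

theorem pderiv_one_eq_of_cocycle (P : MvPolynomial (Fin 2) R)
    (hcocycle :
      (aeval ![X 0, X 1 + X 2] P : MvPolynomial (Fin 3) R)
        - aeval ![X 0 + X 1, X 2] P
        - aeval ![X 0, X 1] P
        + aeval ![X 1, X 2] P = 0) :
    pderiv 1 P = aeval ![X 0 + X 1, 0] (pderiv 1 P) - aeval ![X 1, 0] (pderiv 1 P) := by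
  have h := congrArg (fun q => aeval ![X 0, X 1, (0 : MvPolynomial (Fin 2) R)] (pderiv 2 q))
    hcocycle
  simp only [map_sub, map_add, pderiv_aeval, Fin.sum_univ_two, Matrix.cons_val_zero,
    Matrix.cons_val_one, pderiv_X_self, pderiv_X_of_ne (show (0 : Fin 3) ≠ 2 by decide),
    pderiv_X_of_ne (show (1 : Fin 3) ≠ 2 by decide), mul_zero, mul_one, zero_add, add_zero,
    sub_zero, algHom_aeval_vecCons_two, aeval_X, Matrix.cons_val_two, Matrix.tail_cons,
    Matrix.head_cons, map_zero, aeval_vecCons_X_zero_X_one] at h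
  linear_combination h

end Coboundary

theorem polynomial_two_cocycle_is_coboundary_general
    (K : Type*) [Field K] [CharZero K] (P : MvPolynomial (Fin 2) K)
    (hcocycle :
      (aeval ![X 0, X 1 + X 2] P : MvPolynomial (Fin 3) K)
        - aeval ![X 0 + X 1, X 2] P
        - aeval ![X 0, X 1] P
        + aeval ![X 1, X 2] P = 0)
    (hu0 : (aeval ![X 0, 0] P : MvPolynomial (Fin 2) K) = 0) :
    ∃ Q : Polynomial K, Q.coeff 0 = 0 ∧
      P = Polynomial.aeval (X 0 + X 1 : MvPolynomial (Fin 2) K) Q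
            - Polynomial.aeval (X 0 : MvPolynomial (Fin 2) K) Q
            - Polynomial.aeval (X 1 : MvPolynomial (Fin 2) K) Q := by
  set g : Polynomial K := aeval ![Polynomial.X, 0] (pderiv 1 P)
  have hg (s : MvPolynomial (Fin 2) K) : Polynomial.aeval s g = aeval ![s, 0] (pderiv 1 P) := by
    rw [algHom_aeval_vecCons_two, Polynomial.aeval_X, map_zero]
  obtain ⟨Q, hQg, hQ0⟩ := Polynomial.exists_derivative_eq_and_coeff_zero_eq_zero g
  have hderiv : pderiv 1 (P - coboundary Q) = 0 := by
    rw [map_sub, pderiv_one_coboundary, hQg, hg, hg, ← pderiv_one_eq_of_cocycle P hcocycle,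
      sub_self]
  have hupdate : Function.update X 1 0 = ![(X 0 : MvPolynomial (Fin 2) K), 0] := by
    funext i
    fin_cases i <;> rfl
  refine ⟨Q, hQ0, sub_eq_zero.mp (show P - coboundary Q = 0 from ?_)⟩
  rw [← aeval_update_X_of_notMem_vars (notMem_vars_of_pderiv_eq_zero hderiv) 0, hupdate,
    map_sub, hu0, aeval_vecCons_X_zero_zero_coboundary, hQ0, map_zero, neg_zero, sub_zero]

/-- Vanishing of the second symmetric (co-Hochschild) cohomology for polynomials in
one variable: a two-variable polynomial cocycle vanishing on the axes is a coboundary. -/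
theorem polynomial_two_cocycle_is_coboundary
    (K : Type*) [Field K] [CharZero K] (P : MvPolynomial (Fin 2) K)
    (hcocycle :
      (aeval ![X 0, X 1 + X 2] P : MvPolynomial (Fin 3) K)
        - aeval ![X 0 + X 1, X 2] P
        - aeval ![X 0, X 1] P
        + aeval ![X 1, X 2] P = 0)
    (hu0 : (aeval ![X 0, 0] P : MvPolynomial (Fin 2) K) = 0)
    (h0v : (aeval ![0, X 1] P : MvPolynomial (Fin 2) K) = 0) :
    ∃ Q : Polynomial K, Q.coeff 0 = 0 ∧
      P = Polynomial.aeval (X 0 + X 1 : MvPolynomial (Fin 2) K) Q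
            - Polynomial.aeval (X 0 : MvPolynomial (Fin 2) K) Q
            - Polynomial.aeval (X 1 : MvPolynomial (Fin 2) K) Q :=
  polynomial_two_cocycle_is_coboundary_general K P hcocycle hu0
end

section
/- Let K be a field of characteristic 0 and S(u,v,w) ∈ K[u,v,w] a homogeneous polynomial of degree k satisfying the identity S(t13+t23, t14+t24, t34) - S(t12+t13, t14, t24+t34) + S(t12, t13+t14, t23+t24) = S(t23, t24, t34) + S(t12, t13, t23) in the polynomial ring K[t12,t13,t14,t23,t24,t34]. Then ∂_u ∂_w S = 0. -/
open MvPolynomial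

/-!
Setting `t13 = t24 = 0` turns the identity into
`S(t23,t14,t34) - S(t12,t14,t34) + S(t12,t14,t23) = S(t23,0,t34) + S(t12,0,t23)`.
Apply `∂_{t12} ∂_{t34}`: every term except `S(t12,t14,t34)` misses one of these two variables,
so `(∂_u ∂_w S)(t12,t14,t34) = 0`, and the substitution `(u,v,w) ↦ (t12,t14,t34)` is injective.
-/

namespace MvPolynomial

variable {R σ τ : Type*} [CommSemiring R]

theorem pderiv_comm (i j : σ) (p : MvPolynomial σ R) :
    pderiv i (pderiv j p) = pderiv j (pderiv i p) := by
  classical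
  induction p using MvPolynomial.induction_on with
  | C a => simp
  | add p q hp hq => simp only [map_add, hp, hq]
  | mul_X p k hp =>
    simp only [Derivation.leibniz, pderiv_X, map_add, hp, smul_eq_mul, Pi.single_apply]
    split_ifs <;> simp <;> abel

theorem pderiv_aeval_eq_zero {g : σ → MvPolynomial τ R} {j : τ}
    (hg : ∀ i, pderiv j (g i) = 0) (p : MvPolynomial σ R) : pderiv j (aeval g p) = 0 := by
  induction p using MvPolynomial.induction_on with
  | C a => simp
  | add p q hp hq => rw [map_add, map_add, hp, hq, add_zero]
  | mul_X p k hp =>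
    rw [map_mul, Derivation.leibniz, aeval_X, hg, hp, smul_zero, smul_zero, add_zero]

theorem pderiv_pderiv_aeval_eq_zero_of_left {g : σ → MvPolynomial τ R} {i j : τ}
    (hg : ∀ k, pderiv i (g k) = 0) (p : MvPolynomial σ R) :
    pderiv i (pderiv j (aeval g p)) = 0 := by
  rw [pderiv_comm, pderiv_aeval_eq_zero hg, map_zero]

theorem pderiv_pderiv_aeval_eq_zero_of_right {g : σ → MvPolynomial τ R} {i j : τ}
    (hg : ∀ k, pderiv j (g k) = 0) (p : MvPolynomial σ R) :
    pderiv i (pderiv j (aeval g p)) = 0 := by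
  rw [pderiv_aeval_eq_zero hg, map_zero]

theorem map_aeval_vec₃ {A B : Type*} [CommSemiring A] [Algebra R A] [CommSemiring B]
    [Algebra R B] (φ : A →ₐ[R] B) (a b c : A) (p : MvPolynomial (Fin 3) R) :
    φ (aeval ![a, b, c] p) = aeval ![φ a, φ b, φ c] p := by
  rw [comp_aeval_apply]
  congr
  ext i
  fin_cases i <;> rfl

theorem aeval_X_vec₃_eq_rename (a b c : σ) (p : MvPolynomial (Fin 3) R) :
    aeval ![(X a : MvPolynomial σ R), X b, X c] p = rename ![a, b, c] p := by
  rw [rename_eq_aeval]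
  congr
  ext i
  fin_cases i <;> rfl

end MvPolynomial

theorem mixed_partial_vanishes_of_cocycle_general
    (K : Type*) [Field K] (S : MvPolynomial (Fin 3) K)
    (hid :
      (aeval ![X 1 + X 3, X 2 + X 4, X 5] S : MvPolynomial (Fin 6) K)
        - aeval ![X 0 + X 1, X 2, X 4 + X 5] S
        + aeval ![X 0, X 1 + X 2, X 3 + X 4] S
      = aeval ![X 3, X 4, X 5] S + aeval ![X 0, X 1, X 3] S) :
    pderiv 0 (pderiv 2 S) = 0 := by
  have hspec : (aeval ![X 3, X 2, X 5] S : MvPolynomial (Fin 6) K) - aeval ![X 0, X 2, X 5] S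
      + aeval ![X 0, X 2, X 3] S = aeval ![X 3, 0, X 5] S + aeval ![X 0, 0, X 3] S := by
    simpa only [map_add, map_sub, map_aeval_vec₃, aeval_X, Matrix.cons_val, add_zero, zero_add]
      using congrArg (aeval (![X 0, 0, X 2, X 3, 0, X 5] : Fin 6 → MvPolynomial (Fin 6) K)) hid
  have hf : Function.Injective (![0, 2, 5] : Fin 3 → Fin 6) := by decide
  have hsurvivor : pderiv 0 (pderiv 5 (aeval ![X 0, X 2, X 5] S : MvPolynomial (Fin 6) K))
      = rename (![0, 2, 5] : Fin 3 → Fin 6) (pderiv 0 (pderiv 2 S)) := by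
    rw [aeval_X_vec₃_eq_rename]
    exact (congrArg (pderiv 0) (pderiv_rename hf 2 S)).trans (pderiv_rename hf 0 _)
  have hD : rename (![0, 2, 5] : Fin 3 → Fin 6) (pderiv 0 (pderiv 2 S)) = 0 := by
    have := congrArg (fun f => pderiv 0 (pderiv 5 f)) hspec
    simp only [map_add, map_sub, hsurvivor, pderiv_pderiv_aeval_eq_zero_of_left,
      pderiv_pderiv_aeval_eq_zero_of_right, Fin.forall_fin_succ, IsEmpty.forall_iff,
      Matrix.cons_val_zero, Matrix.cons_val_succ, pderiv_X, map_zero, Pi.single_apply,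
      Fin.reduceEq, if_false, and_true] at this
    linear_combination -this
  exact (map_eq_zero_iff _ (rename_injective _ hf)).mp hD

/-- Variables of `MvPolynomial (Fin 6) K` are `X 0 = t12`, `X 1 = t13`, `X 2 = t14`,
`X 3 = t23`, `X 4 = t24`, `X 5 = t34`.  If a homogeneous polynomial `S(u,v,w)` of degree `k`
satisfies the pentagon-type identity
`S(t13+t23, t14+t24, t34) - S(t12+t13, t14, t24+t34) + S(t12, t13+t14, t23+t24)
  = S(t23, t24, t34) + S(t12, t13, t23)`,
then `∂_u ∂_w S = 0`. -/
theorem mixed_partial_vanishes_of_cocycle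
    (K : Type*) [Field K] [CharZero K] (k : ℕ) (S : MvPolynomial (Fin 3) K)
    (hhom : S.IsHomogeneous k)
    (hid :
      (aeval ![X 1 + X 3, X 2 + X 4, X 5] S : MvPolynomial (Fin 6) K)
        - aeval ![X 0 + X 1, X 2, X 4 + X 5] S
        + aeval ![X 0, X 1 + X 2, X 3 + X 4] S
      = aeval ![X 3, X 4, X 5] S + aeval ![X 0, X 1, X 3] S) :
    pderiv 0 (pderiv 2 S) = 0 :=
  mixed_partial_vanishes_of_cocycle_general K S hid
end

section
/- Let A be an associative algebra over K[[ħ]] (K a field of characteristic 0), and let Σ, Σ' be subsets of {1,…,n}. Suppose x ∈ A^{⊗n} is supported on Σ (i.e., it is a sum of pure tensors which equal 1 in every factor outside Σ) and has ħ-adic valuation at least |Σ|, and similarly y is supported on Σ' with valuation at least |Σ'|. Then (1/ħ)[x,y] is supported on Σ ∪ Σ' and has ħ-adic valuation at least |Σ ∪ Σ'|. -/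
open scoped TensorProduct PiTensorProduct

noncomputable section

/-- For a subset `s` of `{1,…,n}`, the submodule of `A^{⊗n}` of elements supported on `s`:
the span of pure tensors all of whose factors outside `s` equal `1` (the image of the
insertion map `A^{⊗|s|} → A^{⊗n}`). -/
def supportedOn (R : Type*) [CommSemiring R] (n : ℕ) (A : Type*) [Ring A] [Algebra R A]
    (s : Finset (Fin n)) : Submodule R (⨂[R] _ : Fin n, A) :=
  Submodule.span R
    {t | ∃ a : Fin n → A, (∀ i, i ∉ s → a i = 1) ∧ t = PiTensorProduct.tprod R a}

section Aux

variable {R : Type*} [CommSemiring R] {n : ℕ} {A : Type*} [Ring A] [Algebra R A]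

lemma mul_mem_supportedOn_union {S1 S2 : Finset (Fin n)}
    {x y : ⨂[R] _ : Fin n, A} (hx : x ∈ supportedOn R n A S1)
    (hy : y ∈ supportedOn R n A S2) : x * y ∈ supportedOn R n A (S1 ∪ S2) := by
  induction hx using Submodule.span_induction with
  | mem x hxg =>
    induction hy using Submodule.span_induction with
    | mem y hyg =>
      obtain ⟨a, ha, rfl⟩ := hxg
      obtain ⟨b, hb, rfl⟩ := hyg
      rw [PiTensorProduct.tprod_mul_tprod]
      exact Submodule.subset_span ⟨fun i => a i * b i, fun i hi => by
        simp only [Finset.mem_union, not_or] at hi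
        show a i * b i = 1
        rw [ha i hi.1, hb i hi.2, one_mul], rfl⟩
    | zero => simp
    | add y z _ _ h1 h2 => rw [mul_add]; exact add_mem h1 h2
    | smul c y _ h => rw [mul_smul_comm]; exact Submodule.smul_mem _ _ h
  | zero => simp
  | add x z _ _ h1 h2 => rw [add_mul]; exact add_mem h1 h2
  | smul c x _ h => rw [smul_mul_assoc]; exact Submodule.smul_mem _ _ h

lemma commute_of_disjoint {S1 S2 : Finset (Fin n)} (hd : S1 ∩ S2 = ∅)
    {x y : ⨂[R] _ : Fin n, A} (hx : x ∈ supportedOn R n A S1)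
    (hy : y ∈ supportedOn R n A S2) : x * y = y * x := by
  induction hx using Submodule.span_induction with
  | mem x hxg =>
    induction hy using Submodule.span_induction with
    | mem y hyg =>
      obtain ⟨a, ha, rfl⟩ := hxg
      obtain ⟨b, hb, rfl⟩ := hyg
      rw [PiTensorProduct.tprod_mul_tprod, PiTensorProduct.tprod_mul_tprod]
      congr 1
      funext i
      simp only [Pi.mul_apply]
      by_cases h1 : i ∈ S1
      · have h2 : i ∉ S2 := fun h2 => by
          have : i ∈ S1 ∩ S2 := Finset.mem_inter.mpr ⟨h1, h2⟩
          simp [hd] at this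
        rw [hb i h2, one_mul, mul_one]
      · rw [ha i h1, one_mul, mul_one]
    | zero => simp
    | add y z _ _ h1 h2 => rw [mul_add, add_mul, h1, h2]
    | smul c y _ h => rw [mul_smul_comm, smul_mul_assoc, h]
  | zero => simp
  | add x z _ _ h1 h2 => rw [add_mul, mul_add, h1, h2]
  | smul c x _ h => rw [smul_mul_assoc, mul_smul_comm, h]

end Aux

/-- If `x ∈ A^{⊗n}` is `ħ^{|S1|}` times an element supported on `S1` and `y` is `ħ^{|S2|}`
times an element supported on `S2`, then `(1/ħ)[x,y]` is `ħ^{|S1 ∪ S2|}` times an element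
supported on `S1 ∪ S2`; i.e. `[x,y] = ħ^{|S1 ∪ S2| + 1} • w` with `w` supported on `S1 ∪ S2`.
Here the ground ring is `K[[ħ]]` with `ħ = PowerSeries.X`. -/
theorem commutator_supported_valuation
    (K : Type*) [Field K] [CharZero K] (n : ℕ)
    (A : Type*) [Ring A] [Algebra (PowerSeries K) A]
    (S1 S2 : Finset (Fin n)) (x y : ⨂[PowerSeries K] _ : Fin n, A)
    (hx : ∃ x' ∈ supportedOn (PowerSeries K) n A S1,
      x = (PowerSeries.X : PowerSeries K) ^ S1.card • x')
    (hy : ∃ y' ∈ supportedOn (PowerSeries K) n A S2,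
      y = (PowerSeries.X : PowerSeries K) ^ S2.card • y') :
    ∃ w ∈ supportedOn (PowerSeries K) n A (S1 ∪ S2),
      x * y - y * x = (PowerSeries.X : PowerSeries K) ^ ((S1 ∪ S2).card + 1) • w := by
  obtain ⟨x', hx', rfl⟩ := hx
  obtain ⟨y', hy', rfl⟩ := hy
  have key : (PowerSeries.X : PowerSeries K) ^ S1.card • x' *
        (PowerSeries.X : PowerSeries K) ^ S2.card • y' -
      (PowerSeries.X : PowerSeries K) ^ S2.card • y' *
        (PowerSeries.X : PowerSeries K) ^ S1.card • x' =
      (PowerSeries.X : PowerSeries K) ^ (S1.card + S2.card) • (x' * y' - y' * x') := by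
    rw [smul_mul_smul_comm, smul_mul_smul_comm, ← pow_add, ← pow_add, add_comm S2.card,
      smul_sub]
  rcases Nat.eq_zero_or_pos (S1 ∩ S2).card with h0 | hpos
  · refine ⟨0, Submodule.zero_mem _, ?_⟩
    rw [key, commute_of_disjoint (Finset.card_eq_zero.mp h0) hx' hy', sub_self, smul_zero,
      smul_zero]
  · obtain ⟨m, hm⟩ := Nat.exists_eq_add_of_lt hpos
    refine ⟨(PowerSeries.X : PowerSeries K) ^ m • (x' * y' - y' * x'),
      Submodule.smul_mem _ _ (sub_mem (mul_mem_supportedOn_union hx' hy')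
        ((Finset.union_comm S1 S2) ▸ mul_mem_supportedOn_union hy' hx')), ?_⟩
    rw [key, smul_smul, ← pow_add]
    congr 2
    have := Finset.card_union_add_card_inter S1 S2
    omega
end
end

section
/- Let K be a field of characteristic 0 and let P(u,v) be a homogeneous polynomial of degree k in two variables over K. If P(u, v+w) − P(u+v, w) − P(u,v) depends only on (v,w) (i.e., equals its value at u = 0), then P(u,v) = P̄(u+v) − P̄(u) − R(v) for some homogeneous degree-k monomials P̄, R in one variable over K; conversely, any P of this form satisfies that condition. -/
open MvPolynomial

section Aux

variable {K : Type*} [CommRing K]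

private lemma pderiv_aeval2 (f : Fin 2 → MvPolynomial (Fin 3) K) (j : Fin 3)
    (p : MvPolynomial (Fin 2) K) :
    pderiv j (aeval f p) =
      aeval f (pderiv 0 p) * pderiv j (f 0) + aeval f (pderiv 1 p) * pderiv j (f 1) := by
  induction p using MvPolynomial.induction_on with
  | C a => simp
  | add p q hp hq => simp only [map_add, hp, hq]; ring
  | mul_X p i hp =>
    rw [map_mul, aeval_X, pderiv_mul, hp]
    have h10 : (1 : Fin 2) ≠ 0 := by decide
    have h01 : (0 : Fin 2) ≠ 1 := by decide
    fin_cases i <;>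
      simp only [Fin.isValue, pderiv_mul, pderiv_X_self, pderiv_X_of_ne h01,
        pderiv_X_of_ne h10, map_add, map_mul, aeval_X, mul_one, mul_zero, add_zero,
        Fin.zero_eta, Fin.mk_one, map_zero] <;> ring

private lemma isHom_iff2 {p : MvPolynomial (Fin 2) K} {n : ℕ} (h : p.IsHomogeneous n) :
    ∀ d : Fin 2 →₀ ℕ, coeff d p ≠ 0 → d 0 + d 1 = n := by
  intro d hd
  have := h hd
  rw [show (Finsupp.weight 1 : (Fin 2 →₀ ℕ) →+ ℕ) = Finsupp.weight (fun _ => 1) from rfl, ← Finsupp.degree_eq_weight_one] at this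
  rw [← this, Finsupp.degree_apply]
  rw [show ∑ i ∈ d.support, d i = ∑ i : Fin 2, d i from
    Finset.sum_subset (Finset.subset_univ _)
      (fun i _ hi => Finsupp.notMem_support_iff.mp hi), Fin.sum_univ_two]

private lemma hom_pderiv {p : MvPolynomial (Fin 2) K} {n : ℕ} (h : p.IsHomogeneous n)
    (i : Fin 2) : (pderiv i p).IsHomogeneous (n - 1) := by
  intro d hd
  rw [show (Finsupp.weight 1 : (Fin 2 →₀ ℕ) →+ ℕ) = Finsupp.weight (fun _ => 1) from rfl, ← Finsupp.degree_eq_weight_one, Finsupp.degree_apply,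
    show ∑ i ∈ d.support, d i = ∑ i : Fin 2, d i from
      Finset.sum_subset (Finset.subset_univ _)
        (fun i _ hi => Finsupp.notMem_support_iff.mp hi), Fin.sum_univ_two]
  rw [← support_sum_monomial_coeff p, map_sum, MvPolynomial.coeff_sum] at hd
  obtain ⟨s, hs, hne⟩ := Finset.exists_ne_zero_of_sum_ne_zero hd
  rw [pderiv_monomial, coeff_monomial] at hne
  split_ifs at hne with he
  · subst he
    have hsi : s i ≠ 0 := by
      intro h0
      simp [h0] at hne
    have hdeg := isHom_iff2 h s (MvPolynomial.mem_support_iff.mp hs)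
    fin_cases i <;>
      rw [Finsupp.tsub_apply, Finsupp.tsub_apply] <;>
      simp only [Fin.zero_eta, Fin.mk_one, Fin.isValue, Finsupp.single_eq_same,
        Finsupp.single_eq_of_ne' (by decide : (0:Fin 2) ≠ 1),
        Finsupp.single_eq_of_ne' (by decide : (1:Fin 2) ≠ 0)] at hsi ⊢ <;>
      omega
  · exact absurd rfl hne

private lemma euler2 {p : MvPolynomial (Fin 2) K} {n : ℕ} (h : p.IsHomogeneous n) :
    X 0 * pderiv 0 p + X 1 * pderiv 1 p = n • p := by
  conv_lhs => rw [← support_sum_monomial_coeff p]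
  conv_rhs => rw [← support_sum_monomial_coeff p]
  rw [map_sum, map_sum, Finset.mul_sum, Finset.mul_sum, Finset.smul_sum,
    ← Finset.sum_add_distrib]
  apply Finset.sum_congr rfl
  intro s hs
  have key : ∀ i : Fin 2, X i * pderiv i (monomial s (coeff s p))
      = monomial s (coeff s p * s i) := by
    intro i
    rw [pderiv_monomial]
    rcases Nat.eq_zero_or_pos (s i) with h0 | h0
    · simp [h0]
    · rw [show (X i : MvPolynomial (Fin 2) K) = monomial (Finsupp.single i 1) 1 from rfl,
        monomial_mul, one_mul]
      congr 1
      rw [add_comm, tsub_add_cancel_of_le]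
      exact Finsupp.single_le_iff.mpr h0
  rw [key 0, key 1, ← map_add, smul_monomial]
  congr 1
  have := isHom_iff2 h s (mem_support_iff.mp hs)
  rw [← mul_add, nsmul_eq_mul]
  norm_cast
  rw [this, mul_comm]

private lemma aeval_snd_zero {p : MvPolynomial (Fin 2) K} {n : ℕ} (h : p.IsHomogeneous n)
    (S : MvPolynomial (Fin 2) K) :
    aeval ![S, 0] p = coeff (Finsupp.single 0 n) p • S ^ n := by
  conv_lhs => rw [← support_sum_monomial_coeff p]
  rw [map_sum, Finset.sum_eq_single (Finsupp.single 0 n)]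
  · rw [aeval_monomial, Finsupp.prod_fintype _ _ (fun i => pow_zero _), Fin.prod_univ_two]
    simp only [Matrix.cons_val_zero, Matrix.cons_val_one, Matrix.head_cons,
      Finsupp.single_eq_same, Finsupp.single_eq_of_ne' (by decide : (0:Fin 2) ≠ 1), pow_zero,
      mul_one]
    rw [← Algebra.smul_def]
  · intro b hb hne
    have hb1 : b 1 ≠ 0 := by
      intro h1
      apply hne
      have hb0 : b 0 + b 1 = n := isHom_iff2 h b (mem_support_iff.mp hb)
      ext i
      fin_cases i
      · simp only [Fin.zero_eta, Finsupp.single_eq_same]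
        omega
      · simp only [Fin.mk_one, Finsupp.single_eq_of_ne' (by decide : (0:Fin 2) ≠ 1)]
        exact h1
    rw [aeval_monomial, Finsupp.prod_fintype _ _ (fun i => pow_zero _), Fin.prod_univ_two]
    simp [zero_pow hb1]
  · intro hmem
    rw [notMem_support_iff.mp hmem]
    simp

private lemma aeval_fst_zero {p : MvPolynomial (Fin 2) K} {n : ℕ} (h : p.IsHomogeneous n)
    (T : MvPolynomial (Fin 2) K) :
    aeval ![0, T] p = coeff (Finsupp.single 1 n) p • T ^ n := by
  conv_lhs => rw [← support_sum_monomial_coeff p]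
  rw [map_sum, Finset.sum_eq_single (Finsupp.single 1 n)]
  · rw [aeval_monomial, Finsupp.prod_fintype _ _ (fun i => pow_zero _), Fin.prod_univ_two]
    simp only [Matrix.cons_val_zero, Matrix.cons_val_one, Matrix.head_cons,
      Finsupp.single_eq_same, Finsupp.single_eq_of_ne' (by decide : (1:Fin 2) ≠ 0), pow_zero,
      one_mul]
    rw [← Algebra.smul_def]
  · intro b hb hne
    have hb0 : b 0 ≠ 0 := by
      intro h1
      apply hne
      have hb' : b 0 + b 1 = n := isHom_iff2 h b (mem_support_iff.mp hb)
      ext i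
      fin_cases i
      · simp only [Fin.zero_eta, Finsupp.single_eq_of_ne' (by decide : (1:Fin 2) ≠ 0)]
        exact h1
      · simp only [Fin.mk_one, Finsupp.single_eq_same]
        omega
    rw [aeval_monomial, Finsupp.prod_fintype _ _ (fun i => pow_zero _), Fin.prod_univ_two]
    simp [zero_pow hb0]
  · intro hmem
    rw [notMem_support_iff.mp hmem]
    simp

private lemma pderiv_comm2 (a b : Fin 2) (p : MvPolynomial (Fin 2) K) :
    pderiv a (pderiv b p) = pderiv b (pderiv a p) := by
  induction p using MvPolynomial.induction_on with
  | C c => simp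
  | add p q hp hq => simp [hp, hq]
  | mul_X p i hp =>
    have h0 : ∀ (c d : Fin 2), pderiv c (pderiv d (X i : MvPolynomial (Fin 2) K)) = 0 := by
      intro c d
      rcases eq_or_ne i d with rfl | h
      · simp
      · simp [h]
    simp only [pderiv_mul, map_add, hp, h0, mul_zero, add_zero]
    ring

private lemma aeval_vec2 {A : Type*} [CommRing A] [Algebra K A] {f g : Fin 2 → A}
    (h0 : f 0 = g 0) (h1 : f 1 = g 1) (p : MvPolynomial (Fin 2) K) :
    aeval f p = aeval g p := by
  have : f = g := by funext i; fin_cases i <;> assumption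
  rw [this]

end Aux

/-- A homogeneous two-variable polynomial `P` of degree `k` satisfies
`P(u,v+w) - P(u+v,w) - P(u,v) = P(0,v+w) - P(v,w) - P(0,v)` (i.e. this expression depends
only on `(v,w)`) if and only if `P(u,v) = P̄(u+v) - P̄(u) - R(v)` for some monomials
`P̄`, `R` of degree `k` in one variable. -/
theorem form_P_characterization
    (K : Type*) [Field K] [CharZero K] (k : ℕ) (P : MvPolynomial (Fin 2) K)
    (hhom : P.IsHomogeneous k) :
    ((aeval ![X 0, X 1 + X 2] P : MvPolynomial (Fin 3) K)
        - aeval ![X 0 + X 1, X 2] P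
        - aeval ![X 0, X 1] P
      = (aeval ![0, X 1 + X 2] P : MvPolynomial (Fin 3) K)
        - aeval ![X 1, X 2] P
        - aeval ![0, X 1] P)
    ↔ ∃ Pbar R : Polynomial K,
        (∃ c : K, Pbar = c • Polynomial.X ^ k) ∧ (∃ c : K, R = c • Polynomial.X ^ k) ∧
        P = Polynomial.aeval (X 0 + X 1 : MvPolynomial (Fin 2) K) Pbar
              - Polynomial.aeval (X 0 : MvPolynomial (Fin 2) K) Pbar
              - Polynomial.aeval (X 1 : MvPolynomial (Fin 2) K) R := by
  constructor
  · intro H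
    rcases Nat.eq_zero_or_pos k with rfl | hkpos
    · -- degree 0 : P is a constant
      have hPC : P = C (coeff 0 P) := by
        apply MvPolynomial.ext
        intro d
        rw [coeff_C]
        rcases eq_or_ne d 0 with rfl | hd
        · simp
        · rw [if_neg (fun h => hd h.symm)]
          by_contra hne
          have h0 := isHom_iff2 hhom d hne
          apply hd
          ext i
          fin_cases i <;> simp <;> omega
      refine ⟨0, (-(coeff 0 P)) • Polynomial.X ^ 0, ⟨0, by simp⟩, ⟨-(coeff 0 P), rfl⟩, ?_⟩
      rw [hPC]
      simp [smul_eq_C_mul]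
    obtain ⟨n, rfl⟩ : ∃ n, k = n + 1 := ⟨k - 1, (Nat.succ_pred_eq_of_pos hkpos).symm⟩
    have hQ : (pderiv 1 P).IsHomogeneous n := hom_pderiv hhom 1
    have hPu : (pderiv 0 P).IsHomogeneous n := hom_pderiv hhom 0
    -- abbreviations for coefficients
    set α : K := coeff (Finsupp.single 0 n) (pderiv 1 P) with hαdef
    set β : K := coeff (Finsupp.single 1 n) (pderiv 1 P) with hβdef
    set γ : K := coeff (Finsupp.single 1 n) (pderiv 0 P) with hγdef
    have h20 : pderiv 2 (X 0 : MvPolynomial (Fin 3) K) = 0 :=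
      pderiv_X_of_ne (by decide)
    have h21 : pderiv 2 (X 1 : MvPolynomial (Fin 3) K) = 0 :=
      pderiv_X_of_ne (by decide)
    have h01' : pderiv 0 (X 1 : MvPolynomial (Fin 3) K) = 0 :=
      pderiv_X_of_ne (by decide)
    have h02' : pderiv 0 (X 2 : MvPolynomial (Fin 3) K) = 0 :=
      pderiv_X_of_ne (by decide)
    -- derivative in w of the hypothesis
    have d1 : pderiv 2 (aeval ![X 0, X 1 + X 2] P : MvPolynomial (Fin 3) K)
        = aeval ![X 0, X 1 + X 2] (pderiv 1 P) := by
      rw [pderiv_aeval2]; simp [h20, h21]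
    have d2 : pderiv 2 (aeval ![X 0 + X 1, X 2] P : MvPolynomial (Fin 3) K)
        = aeval ![X 0 + X 1, X 2] (pderiv 1 P) := by
      rw [pderiv_aeval2]; simp [h20, h21]
    have d3 : pderiv 2 (aeval ![X 0, X 1] P : MvPolynomial (Fin 3) K) = 0 := by
      rw [pderiv_aeval2]; simp [h20, h21]
    have d4 : pderiv 2 (aeval ![0, X 1 + X 2] P : MvPolynomial (Fin 3) K)
        = aeval ![0, X 1 + X 2] (pderiv 1 P) := by
      rw [pderiv_aeval2]; simp [h20, h21]
    have d5 : pderiv 2 (aeval ![X 1, X 2] P : MvPolynomial (Fin 3) K)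
        = aeval ![X 1, X 2] (pderiv 1 P) := by
      rw [pderiv_aeval2]; simp [h21]
    have d6 : pderiv 2 (aeval ![0, X 1] P : MvPolynomial (Fin 3) K) = 0 := by
      rw [pderiv_aeval2]; simp [h21]
    have H2 := congrArg (fun x : MvPolynomial (Fin 3) K => pderiv 2 x) H
    simp only [map_sub] at H2
    rw [d1, d2, d3, d4, d5, d6, sub_zero, sub_zero] at H2
    -- substitute w := 0
    have e1 : aeval ![X 0, X 1, (0 : MvPolynomial (Fin 2) K)]
        (aeval ![X 0, X 1 + X 2] (pderiv 1 P) : MvPolynomial (Fin 3) K) = pderiv 1 P := by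
      rw [comp_aeval_apply, aeval_vec2 (g := X) (by simp) (by simp)]
      exact aeval_X_left_apply _
    have e2 : aeval ![X 0, X 1, (0 : MvPolynomial (Fin 2) K)]
        (aeval ![X 0 + X 1, X 2] (pderiv 1 P) : MvPolynomial (Fin 3) K)
        = aeval ![X 0 + X 1, 0] (pderiv 1 P) := by
      rw [comp_aeval_apply]
      exact aeval_vec2 (by simp) (by simp) _
    have e3 : aeval ![X 0, X 1, (0 : MvPolynomial (Fin 2) K)]
        (aeval ![0, X 1 + X 2] (pderiv 1 P) : MvPolynomial (Fin 3) K)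
        = aeval ![0, X 1] (pderiv 1 P) := by
      rw [comp_aeval_apply]
      exact aeval_vec2 (by simp) (by simp) _
    have e4 : aeval ![X 0, X 1, (0 : MvPolynomial (Fin 2) K)]
        (aeval ![X 1, X 2] (pderiv 1 P) : MvPolynomial (Fin 3) K)
        = aeval ![X 1, 0] (pderiv 1 P) := by
      rw [comp_aeval_apply]
      exact aeval_vec2 (by simp) (by simp) _
    have EQ2 := congrArg (fun x : MvPolynomial (Fin 3) K
      => aeval ![X 0, X 1, (0 : MvPolynomial (Fin 2) K)] x) H2
    simp only [map_sub] at EQ2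
    rw [e1, e2, e3, e4, aeval_snd_zero hQ, aeval_fst_zero hQ, aeval_snd_zero hQ, ← hαdef,
      ← hβdef] at EQ2
    have hQf : pderiv 1 P = C α * (X 0 + X 1) ^ n + C β * X 1 ^ n - C α * X 1 ^ n := by
      simp only [smul_eq_C_mul] at EQ2
      linear_combination EQ2
    -- derivative in u of the hypothesis
    have d7 : pderiv 0 (aeval ![X 0, X 1 + X 2] P : MvPolynomial (Fin 3) K)
        = aeval ![X 0, X 1 + X 2] (pderiv 0 P) := by
      rw [pderiv_aeval2]; simp [h01', h02']
    have d8 : pderiv 0 (aeval ![X 0 + X 1, X 2] P : MvPolynomial (Fin 3) K)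
        = aeval ![X 0 + X 1, X 2] (pderiv 0 P) := by
      rw [pderiv_aeval2]; simp [h01', h02']
    have d9 : pderiv 0 (aeval ![X 0, X 1] P : MvPolynomial (Fin 3) K)
        = aeval ![X 0, X 1] (pderiv 0 P) := by
      rw [pderiv_aeval2]; simp [h01']
    have d10 : pderiv 0 (aeval ![0, X 1 + X 2] P : MvPolynomial (Fin 3) K) = 0 := by
      rw [pderiv_aeval2]; simp [h01', h02']
    have d11 : pderiv 0 (aeval ![X 1, X 2] P : MvPolynomial (Fin 3) K) = 0 := by
      rw [pderiv_aeval2]; simp [h01', h02']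
    have d12 : pderiv 0 (aeval ![0, X 1] P : MvPolynomial (Fin 3) K) = 0 := by
      rw [pderiv_aeval2]; simp [h01']
    have H0 := congrArg (fun x : MvPolynomial (Fin 3) K => pderiv 0 x) H
    simp only [map_sub] at H0
    rw [d7, d8, d9, d10, d11, d12, sub_zero, sub_zero] at H0
    -- substitute u := 0
    have f1 : aeval ![(0 : MvPolynomial (Fin 2) K), X 0, X 1]
        (aeval ![X 0, X 1 + X 2] (pderiv 0 P) : MvPolynomial (Fin 3) K)
        = aeval ![0, X 0 + X 1] (pderiv 0 P) := by
      rw [comp_aeval_apply]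
      exact aeval_vec2 (by simp) (by simp) _
    have f2 : aeval ![(0 : MvPolynomial (Fin 2) K), X 0, X 1]
        (aeval ![X 0 + X 1, X 2] (pderiv 0 P) : MvPolynomial (Fin 3) K) = pderiv 0 P := by
      rw [comp_aeval_apply, aeval_vec2 (g := X) (by simp) (by simp)]
      exact aeval_X_left_apply _
    have f3 : aeval ![(0 : MvPolynomial (Fin 2) K), X 0, X 1]
        (aeval ![X 0, X 1] (pderiv 0 P) : MvPolynomial (Fin 3) K)
        = aeval ![0, X 0] (pderiv 0 P) := by
      rw [comp_aeval_apply]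
      exact aeval_vec2 (by simp) (by simp) _
    have EQ0 := congrArg (fun x : MvPolynomial (Fin 3) K
      => aeval ![(0 : MvPolynomial (Fin 2) K), X 0, X 1] x) H0
    simp only [map_sub, map_zero] at EQ0
    rw [f1, f2, f3, aeval_fst_zero hPu, aeval_fst_zero hPu, ← hγdef] at EQ0
    have hPuf : pderiv 0 P = C γ * (X 0 + X 1) ^ n - C γ * X 0 ^ n := by
      simp only [smul_eq_C_mul] at EQ0
      linear_combination -EQ0
    have hX01 : (X 0 + X 1 : MvPolynomial (Fin 2) K) ≠ 0 := by
      intro h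
      have := congrArg (eval ![(1 : K), 0]) h
      simp at this
    -- γ = α (when n ≥ 1), so Pu is expressed through α
    have hPuf' : pderiv 0 P = C α * (X 0 + X 1) ^ n - C α * X 0 ^ n := by
      rcases Nat.eq_zero_or_pos n with rfl | hn
      · rw [hPuf]; simp
      obtain ⟨m, rfl⟩ : ∃ m, n = m + 1 := ⟨n - 1, (Nat.succ_pred_eq_of_pos hn).symm⟩
      have hd1 : pderiv 0 (pderiv 1 P)
          = C α * (((m + 1 : ℕ) : MvPolynomial (Fin 2) K) * (X 0 + X 1) ^ m) := by
        rw [hQf]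
        simp [pderiv_C_mul, pderiv_pow,
          pderiv_X_of_ne (show (1 : Fin 2) ≠ 0 by decide)]
      have hd2 : pderiv 1 (pderiv 0 P)
          = C γ * (((m + 1 : ℕ) : MvPolynomial (Fin 2) K) * (X 0 + X 1) ^ m) := by
        rw [hPuf]
        simp [pderiv_C_mul, pderiv_pow,
          pderiv_X_of_ne (show (0 : Fin 2) ≠ 1 by decide)]
      have hcc : C α * (((m + 1 : ℕ) : MvPolynomial (Fin 2) K) * (X 0 + X 1) ^ m)
          = C γ * (((m + 1 : ℕ) : MvPolynomial (Fin 2) K) * (X 0 + X 1) ^ m) := by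
        rw [← hd1, ← hd2]
        exact pderiv_comm2 0 1 P
      have hEne : (((m + 1 : ℕ) : MvPolynomial (Fin 2) K) * (X 0 + X 1) ^ m) ≠ 0 := by
        apply mul_ne_zero
        · rw [← map_natCast (C : K →+* MvPolynomial (Fin 2) K)]
          simp only [ne_eq, C_eq_zero, Nat.cast_eq_zero]
          omega
        · exact pow_ne_zero _ hX01
      have : α = γ := C_injective _ _ (mul_right_cancel₀ hEne hcc)
      rw [hPuf, ← this]
    -- Euler identity
    have hE := euler2 hhom
    rw [hPuf', hQf] at hE
    have hsm : (n + 1) • P = C ((n + 1 : ℕ) : K) * P := by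
      rw [nsmul_eq_mul, map_natCast]
    rw [hsm] at hE
    have hκ : ((n + 1 : ℕ) : K) ≠ 0 := Nat.cast_ne_zero.mpr (Nat.succ_ne_zero n)
    refine ⟨(α / ((n + 1 : ℕ) : K)) • Polynomial.X ^ (n + 1),
      ((α - β) / ((n + 1 : ℕ) : K)) • Polynomial.X ^ (n + 1), ⟨_, rfl⟩, ⟨_, rfl⟩, ?_⟩
    simp only [map_smul, map_pow, Polynomial.aeval_X]
    rw [smul_eq_C_mul, smul_eq_C_mul, smul_eq_C_mul]
    have hκ' : ((n : K) + 1) ≠ 0 := by exact_mod_cast hκ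
    have hCκ : (C ((n + 1 : ℕ) : K) : MvPolynomial (Fin 2) K) ≠ 0 := by
      simp only [ne_eq, C_eq_zero]
      exact hκ
    apply mul_left_cancel₀ hCκ
    have hKc : (C ((n + 1 : ℕ) : K) : MvPolynomial (Fin 2) K) * C (α / ((n + 1 : ℕ) : K))
        = C α := by
      rw [← map_mul]
      congr 1
      push_cast
      rw [mul_comm]
      exact div_mul_cancel₀ _ hκ'
    have hKc' : (C ((n + 1 : ℕ) : K) : MvPolynomial (Fin 2) K)
        * C ((α - β) / ((n + 1 : ℕ) : K)) = C α - C β := by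
      rw [← map_mul, show ((n + 1 : ℕ) : K) * ((α - β) / ((n + 1 : ℕ) : K)) = α - β from by
        push_cast
        rw [mul_comm]
        exact div_mul_cancel₀ _ hκ', map_sub]
    rw [mul_sub, mul_sub, ← mul_assoc, ← mul_assoc, ← mul_assoc, hKc, hKc', ← hE,
      pow_succ (X 0 + X 1 : MvPolynomial (Fin 2) K) n, pow_succ (X 0 : MvPolynomial (Fin 2) K) n,
      pow_succ (X 1 : MvPolynomial (Fin 2) K) n]
    ring
  · rintro ⟨Pbar, R, ⟨c, rfl⟩, ⟨c', rfl⟩, rfl⟩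
    simp only [map_smul, map_pow, Polynomial.aeval_X, map_sub, map_add, aeval_X,
      Matrix.cons_val_zero, Matrix.cons_val_one, Matrix.head_cons, map_zero]
    simp only [smul_eq_C_mul]
    ring
end
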